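/- Let B ⊂ Z^d be finite with closure B̄ = B ∪ ∂B, and let u : B̄ → R. If M := min_{∂B} u - min_B u > 0 and u(x₀) = min_B u for some x₀ ∈ B, then the open Euclidean ball of radius M/diam(B̄) centered at the origin is contained in the subdifferential set ∂u(B) = ∪_{x∈B} ∂u(x;B). -/
import Mathlib


open MeasureTheory Finset
open scoped Classical

/-- Two lattice points are nearest neighbors. -/
def latAdj {d : ℕ} (x y : Fin d → ℤ) : Prop := (∑ i, |x i - y i|) = 1

/-- The set of the `2d` nearest neighbors of a lattice point. -/
def latNbrs {d : ℕ} (x : Fin d → ℤ) : Finset (Fin d → ℤ) :=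
  Finset.image
    (fun js : Fin d × Bool => fun i => x i + (if i = js.1 then (if js.2 then 1 else -1) else 0))
    Finset.univ

/-- The discrete boundary of a finite set `E ⊂ ℤ^d`. -/
def latBd {d : ℕ} (E : Finset (Fin d → ℤ)) : Finset (Fin d → ℤ) := (E.biUnion latNbrs) \ E

/-- The discrete closure `Ē = E ∪ ∂E`. -/
def latCl {d : ℕ} (E : Finset (Fin d → ℤ)) : Finset (Fin d → ℤ) := E ∪ latBd E

/-- Dot product of `p ∈ ℝ^d` with a lattice point. -/
def dotZ {d : ℕ} (p : Fin d → ℝ) (x : Fin d → ℤ) : ℝ := ∑ i, p i * (x i : ℝ)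

/-- The subdifferential `∂u(x;E)`. -/
def subdiff {d : ℕ} (u : (Fin d → ℤ) → ℝ) (E : Finset (Fin d → ℤ)) (x : Fin d → ℤ) :
    Set (Fin d → ℝ) :=
  {p | ∀ y ∈ latCl E, u x - dotZ p x ≤ u y - dotZ p y}

/-- The subdifferential `∂u(A;E) = ⋃_{x ∈ A} ∂u(x;E)`. -/
def subdiffU {d : ℕ} (u : (Fin d → ℤ) → ℝ) (A E : Finset (Fin d → ℤ)) : Set (Fin d → ℝ) :=
  ⋃ x ∈ A, subdiff u E x

/-- Euclidean distance between lattice points. -/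
noncomputable def distZ {d : ℕ} (x y : Fin d → ℤ) : ℝ :=
  Real.sqrt (∑ i, ((x i - y i : ℤ) : ℝ) ^ 2)

/-- The Euclidean diameter of `B̄ = B ∪ ∂B`. -/
noncomputable def latDiam {d : ℕ} (E : Finset (Fin d → ℤ)) : ℝ :=
  sSup {r | ∃ x ∈ latCl E, ∃ y ∈ latCl E, r = distZ x y}

lemma distZ_le_latDiam {d : ℕ} {E : Finset (Fin d → ℤ)} {x y : Fin d → ℤ}
    (hx : x ∈ latCl E) (hy : y ∈ latCl E) : distZ x y ≤ latDiam E := by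
  have hfin : {r | ∃ a ∈ latCl E, ∃ b ∈ latCl E, r = distZ a b}.Finite := by
    have : {r | ∃ a ∈ latCl E, ∃ b ∈ latCl E, r = distZ a b} ⊆
        (fun q : (Fin d → ℤ) × (Fin d → ℤ) => distZ q.1 q.2) ''
          ((latCl E : Set (Fin d → ℤ)) ×ˢ (latCl E : Set (Fin d → ℤ))) := by
      rintro r ⟨a, ha, b, hb, rfl⟩
      exact ⟨(a, b), ⟨ha, hb⟩, rfl⟩
    exact Set.Finite.subset (((latCl E).finite_toSet.prod (latCl E).finite_toSet).image _) this
  exact le_csSup hfin.bddAbove ⟨x, hx, y, hy, rfl⟩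

/-- If `M = min_{∂B} u - min_B u > 0` and the minimum over `B` is attained at `x₀ ∈ B`, then
the open Euclidean ball of radius `M / diam(B̄)` (centered at the origin) is contained in
`∂u(B) = ⋃_{x ∈ B} ∂u(x;B)`. -/
theorem ball_subset_subdifferential (d : ℕ) (hd : 0 < d)
    (B : Finset (Fin d → ℤ)) (hB : B.Nonempty) (hbd : (latBd B).Nonempty)
    (u : (Fin d → ℤ) → ℝ) (M : ℝ)
    (hM : M = (latBd B).inf' hbd u - B.inf' hB u) (hMpos : 0 < M)
    (x₀ : Fin d → ℤ) (hx₀ : x₀ ∈ B) (hmin : u x₀ = B.inf' hB u) :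
    {p : Fin d → ℝ | Real.sqrt (∑ i, p i ^ 2) < M / latDiam B} ⊆ subdiffU u B B := by
  intro p hp
  simp only [Set.mem_setOf_eq] at hp
  have hsubcl : B ⊆ latCl B := Finset.subset_union_left
  have hbdcl : latBd B ⊆ latCl B := Finset.subset_union_right
  -- diameter is positive
  obtain ⟨y₀, hy₀⟩ := id hbd
  have hy₀B : y₀ ∉ B := (Finset.mem_sdiff.mp hy₀).2
  have hne : x₀ ≠ y₀ := fun h => hy₀B (h ▸ hx₀)
  have hDpos : 0 < latDiam B := by
    have hdpos : 0 < distZ x₀ y₀ := by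
      obtain ⟨i, hi⟩ : ∃ i, x₀ i ≠ y₀ i := by
        by_contra h
        push_neg at h
        exact hne (funext h)
      apply Real.sqrt_pos.mpr
      apply Finset.sum_pos' (fun j _ => sq_nonneg _) ⟨i, Finset.mem_univ i, ?_⟩
      have : ((x₀ i - y₀ i : ℤ) : ℝ) ≠ 0 := by
        exact_mod_cast sub_ne_zero.mpr hi
      positivity
    exact lt_of_lt_of_le hdpos (distZ_le_latDiam (hsubcl hx₀) (hbdcl hy₀))
  -- minimizer over the closure
  have hclne : (latCl B).Nonempty := hB.mono hsubcl
  obtain ⟨x', hx', hmin'⟩ :=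
    (latCl B).exists_min_image (fun y => u y - dotZ p y) hclne
  -- x' ∈ B
  have hx'B : x' ∈ B := by
    by_contra hxB
    have hx'bd : x' ∈ latBd B := by
      rcases Finset.mem_union.mp hx' with h | h
      · exact absurd h hxB
      · exact h
    have h1 : u x' - dotZ p x' ≤ u x₀ - dotZ p x₀ := hmin' x₀ (hsubcl hx₀)
    have h2 : (latBd B).inf' hbd u ≤ u x' := Finset.inf'_le _ hx'bd
    have h3 : M ≤ dotZ p x' - dotZ p x₀ := by
      have : u x' - u x₀ ≤ dotZ p x' - dotZ p x₀ := by linarith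
      have h4 : M ≤ u x' - u x₀ := by rw [hM, hmin]; linarith
      linarith
    have hCS : dotZ p x' - dotZ p x₀ ≤ Real.sqrt (∑ i, p i ^ 2) * distZ x' x₀ := by
      have : dotZ p x' - dotZ p x₀ = ∑ i, p i * ((x' i - x₀ i : ℤ) : ℝ) := by
        simp only [dotZ, ← Finset.sum_sub_distrib]
        congr 1; funext i; push_cast; ring
      rw [this, distZ]
      exact Real.sum_mul_le_sqrt_mul_sqrt _ _ _
    have hd2 : distZ x' x₀ ≤ latDiam B := distZ_le_latDiam hx' (hsubcl hx₀)
    have hpn : 0 ≤ Real.sqrt (∑ i, p i ^ 2) := Real.sqrt_nonneg _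
    have : Real.sqrt (∑ i, p i ^ 2) * latDiam B < M := (lt_div_iff₀ hDpos).mp hp
    nlinarith
  exact Set.mem_biUnion hx'B (fun y hy => hmin' y hy)
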